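/- arXiv:2310.06223 — 4 statements merged into one kernel-verified Lean document; each statement's English description precedes it below -/
import Mathlib

section
/- Let L > 0, let f(x) = (L/2)x² on ℝ, and let X = {x ∈ ℝ : x ≥ 1}, so the metric projection onto X is P_X(x) = max(x, 1) and x* = 1 is the unique minimizer of f over X. Fix any η > 0 and any initial point x[0] ∈ X with x[0] ≠ 1, and define the centralized projected gradient iterates x[k+1] = P_X((1 − ηL)x[k]) = max((1 − ηL)x[k], 1). If c ≥ 0 is any constant such that |x[k+1] − x[k]| ≤ c·|x[k] − x*| for all k ≥ 0, then c ≥ 1. In particular, there is a uniform constant b = 1 > 0 such that any such coefficient c(η) satisfies c(η) ≥ b for every η > 0. -/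
/-- Impossibility for the centralized projected gradient method,
Lemma `pgd_impossibility`. With `f(x) = (L/2) x²` on `ℝ`, constraint set
`X = {x : x ≥ 1}` (so `P_X x = max x 1` and `x* = 1`), any constant `c ≥ 0` satisfying
`|x[k+1] - x[k]| ≤ c |x[k] - x*|` for all `k` along the projected-gradient iterates
`x[k+1] = max ((1 - ηL) x[k]) 1` started from `x[0] ∈ X \ {1}` must satisfy `c ≥ 1`,
for every `η > 0`. In particular the uniform lower bound `b = 1 > 0` works for every `η`. -/
theorem centralized_pgd_impossibility
    (L : ℝ) (hL : 0 < L) (η : ℝ) (hη : 0 < η)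
    (x0 : ℝ) (hx0mem : 1 ≤ x0) (hx0ne : x0 ≠ 1)
    (x : ℕ → ℝ) (hxinit : x 0 = x0)
    (hxiter : ∀ k, x (k + 1) = max ((1 - η * L) * x k) 1)
    (c : ℝ) (hc : 0 ≤ c)
    (hbound : ∀ k, |x (k + 1) - x k| ≤ c * |x k - 1|) :
    1 ≤ c := by
  set q : ℝ := 1 - η * L with hqdef
  have hq1 : q < 1 := by have := mul_pos hη hL; simp [hqdef]; linarith
  -- all iterates are ≥ 1
  have hge : ∀ k, 1 ≤ x k := by
    intro k
    cases k with
    | zero => rw [hxinit]; exact hx0mem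
    | succ n => rw [hxiter n]; exact le_max_right _ _
  -- there exists n with x (n+1) = 1
  have hex : ∃ n, x (n + 1) = 1 := by
    by_contra h
    push_neg at h
    have hgt : ∀ k, 1 < q * x k := by
      intro k
      have h1 := hge (k + 1)
      have h2 := h k
      rw [hxiter k] at h1 h2
      rcases lt_or_ge 1 (q * x k) with h3 | h3
      · exact h3
      · exact absurd (max_eq_right h3) h2
    have hstep : ∀ k, x (k + 1) = q * x k := by
      intro k; rw [hxiter k]; exact max_eq_left (le_of_lt (hgt k))
    have hpow : ∀ k, x k = q ^ k * x0 := by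
      intro k
      induction k with
      | zero => simp [hxinit]
      | succ n ih => rw [hstep n, ih, pow_succ]; ring
    have hx0pos : 0 < x0 := lt_of_lt_of_le one_pos hx0mem
    have hq0 : 0 < q := by
      have := hgt 0
      rw [hxinit] at this
      nlinarith
    -- q^k x0 → 0 contradicts 1 < q * x k = q^{k+1} x0
    have htend : Filter.Tendsto (fun k => q ^ k * x0) Filter.atTop (nhds 0) := by
      have h0 : Filter.Tendsto (fun k : ℕ => q ^ k) Filter.atTop (nhds 0) :=
        tendsto_pow_atTop_nhds_zero_of_lt_one (le_of_lt hq0) hq1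
      simpa using h0.mul_const x0
    have hev : ∀ᶠ k in Filter.atTop, q ^ k * x0 < 1 :=
      htend.eventually (eventually_lt_nhds one_pos)
    rcases hev.exists with ⟨k, hk⟩
    have := hge k
    rw [hpow k] at this
    linarith
  -- take the minimal such n
  set n := Nat.find hex with hndef
  have hn : x (n + 1) = 1 := Nat.find_spec hex
  have hxn : 1 < x n := by
    cases hm : n with
    | zero =>
      rw [hm] at *
      rw [hxinit]
      exact lt_of_le_of_ne hx0mem (Ne.symm hx0ne)
    | succ m =>
      have hne : x (m + 1) ≠ 1 := Nat.find_min hex (by omega)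
      exact lt_of_le_of_ne (hge (m + 1)) (Ne.symm hne)
  have hb := hbound n
  rw [hn] at hb
  rw [abs_of_nonpos (by linarith), abs_of_pos (by linarith)] at hb
  have hpos : 0 < x n - 1 := by linarith
  nlinarith
end

section
/- Let L > 0, n ≥ 1, and consider n agents each with cost function f_i(x) = (L/2)x² on ℝ, constraint set X = {x ∈ ℝ : x ≥ 1} with projection P_X(x) = max(x, 1), and x* = 1 the minimizer of (1/n)Σ_i f_i over X. Run the Projected Push-Pull update with λ = 1, mixing matrices R_{ij} = C_{ij} = 1/n for all i, j, stochastic weight vectors φ = π = (1/n, …, 1/n), and equal initial points x_i[0] = z_i[0] = x0 ∈ X, y_i[0] = f_i'(x0): x_i[k+1] = Σ_j R_{ij} z_j[k], y_i[k+1] = Σ_j C_{ij} y_j[k] + f_i'(x_i[k+1]) − f_i'(x_i[k]), z_i[k+1] = P_X(x_i[k+1] − η y_i[k+1]). Then for every η > 0: if c₁, c₂, c₃ ≥ 0 are constants such that for every common initial point x0 ∈ X with x0 ≠ 1, every agent i, and every k ≥ 0, |x_i[k+1] − x_i[k]| ≤ c₁·√(Σ_j φ_j|x_j[k] − x*|²)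 + c₂·D(x[k], φ) + c₃·S(y[k], π), then c₁ ≥ 1. -/
open Finset

/-- Scalar trajectory of the symmetric push-pull dynamics. -/
def ppSeq (L η x0 : ℝ) : ℕ → ℝ × ℝ × ℝ
  | 0 => (x0, L * x0, x0)
  | (k+1) =>
    let p := ppSeq L η x0 k
    let x' := p.2.2
    let y' := p.2.1 + L * x' - L * p.1
    (x', y', max (x' - η * y') 1)

/-- Impossibility for Projected Push-Pull with `λ = 1`,
Corollary `impossibility_consecutive_x`. `n` agents each with `f_i(x) = (L/2) x²` on `ℝ`,
constraint set `X = {x : x ≥ 1}` (projection `P_X x = max x 1`, optimum `x* = 1`), mixing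
matrices `R_{ij} = C_{ij} = 1/n`, weights `φ = π = (1/n, …, 1/n)`, equal initializations.
For every `η > 0`: if `c₁, c₂, c₃ ≥ 0` bound `|x_i[k+1] - x_i[k]|` by
`c₁·‖x[k] - x*‖_φ + c₂·D(x[k], φ) + c₃·S(y[k], π)` for every common initial point
`x0 ∈ X \ {1}`, every agent `i` and every `k`, then `c₁ ≥ 1`. -/
theorem pushpull_impossibility_consecutive_x
    (L : ℝ) (hL : 0 < L) (n : ℕ) (hn : 1 ≤ n) (η : ℝ) (hη : 0 < η)
    (c₁ c₂ c₃ : ℝ) (hc₁ : 0 ≤ c₁) (hc₂ : 0 ≤ c₂) (hc₃ : 0 ≤ c₃)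
    (hbound : ∀ x0 : ℝ, 1 ≤ x0 → x0 ≠ 1 →
      ∀ x y z : ℕ → Fin n → ℝ,
        (∀ i, x 0 i = x0) → (∀ i, z 0 i = x0) → (∀ i, y 0 i = L * x0) →
        (∀ k i, x (k + 1) i = ∑ j, (1 / (n : ℝ)) * z k j) →
        (∀ k i, y (k + 1) i =
          (∑ j, (1 / (n : ℝ)) * y k j) + L * x (k + 1) i - L * x k i) →
        (∀ k i, z (k + 1) i = max (x (k + 1) i - η * y (k + 1) i) 1) →
        ∀ (i : Fin n) (k : ℕ),
          |x (k + 1) i - x k i| ≤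
            c₁ * Real.sqrt (∑ j, (1 / (n : ℝ)) * |x k j - 1| ^ 2)
            + c₂ * Real.sqrt (∑ i', ∑ j, (1 / (n : ℝ)) * (1 / (n : ℝ)) * |x k i' - x k j| ^ 2)
            + c₃ * Real.sqrt (∑ i', (1 / (n : ℝ)) *
                |y k i' / (1 / (n : ℝ)) - (∑ l, y k l)| ^ 2)) :
    1 ≤ c₁ := by
  have hn0 : (0 : ℝ) < (n : ℝ) := by exact_mod_cast hn
  have hn0' : (n : ℝ) ≠ 0 := ne_of_gt hn0
  have hηL : 0 < η * L := mul_pos hη hL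
  set x0 : ℝ := 1 + η * L with hx0def
  have hx0gt : 1 < x0 := by simp only [hx0def]; linarith
  set X : ℕ → Fin n → ℝ := fun k _ => (ppSeq L η x0 k).1 with hX
  set Y : ℕ → Fin n → ℝ := fun k _ => (ppSeq L η x0 k).2.1 with hY
  set Z : ℕ → Fin n → ℝ := fun k _ => (ppSeq L η x0 k).2.2 with hZ
  have havg : ∀ c : ℝ, (∑ _j : Fin n, (1 / (n : ℝ)) * c) = c := by
    intro c
    rw [Finset.sum_const, card_univ, Fintype.card_fin, nsmul_eq_mul]
    field_simp
  have h1 := hbound x0 (le_of_lt hx0gt) (ne_of_gt hx0gt) X Y Z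
    (fun i => rfl) (fun i => rfl) (fun i => rfl)
    (fun k i => by simp only [hX, hZ, havg]; rfl)
    (fun k i => by simp only [hX, hY, hZ, havg]; rfl)
    (fun k i => by simp only [hX, hY, hZ]; rfl)
    ⟨0, hn⟩ 1
  -- compute the values at steps 1 and 2
  have hx1 : (ppSeq L η x0 1).1 = x0 := rfl
  have hy1 : (ppSeq L η x0 1).2.1 = L * x0 + L * x0 - L * x0 := rfl
  have hz1 : (ppSeq L η x0 1).2.2 = max (x0 - η * (L * x0 + L * x0 - L * x0)) 1 := rfl
  have hx2 : (ppSeq L η x0 2).1 = 1 := by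
    show (ppSeq L η x0 1).2.2 = 1
    rw [hz1, max_eq_right]
    have : x0 - η * (L * x0 + L * x0 - L * x0) = 1 - (η * L) ^ 2 := by
      simp only [hx0def]; ring
    rw [this]; nlinarith
  simp only [hX, hY, hx1, hy1, hx2] at h1
  rw [havg] at h1
  have hD : (∑ _i' : Fin n, ∑ _j : Fin n,
      (1 / (n : ℝ)) * (1 / (n : ℝ)) * |x0 - x0| ^ 2) = 0 := by
    simp
  have hS : (∑ _i' : Fin n, (1 / (n : ℝ)) *
      |(L * x0 + L * x0 - L * x0) / (1 / (n : ℝ)) -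
        ∑ _l : Fin n, (L * x0 + L * x0 - L * x0)| ^ 2) = 0 := by
    simp only [Finset.sum_const, card_univ, Fintype.card_fin, nsmul_eq_mul]
    have h0 : (L * x0 + L * x0 - L * x0) / (1 / (n : ℝ)) -
        (n : ℝ) * (L * x0 + L * x0 - L * x0) = 0 := by
      field_simp; ring
    rw [h0]
    simp
  rw [hD, hS, Real.sqrt_zero] at h1
  have hsq : Real.sqrt (|x0 - 1| ^ 2) = x0 - 1 := by
    rw [Real.sqrt_sq (abs_nonneg _), abs_of_pos (by linarith)]
  rw [hsq] at h1
  have hlhs : |1 - x0| = η * L := by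
    rw [abs_of_nonpos (by linarith)]; simp only [hx0def]; ring
  rw [hlhs] at h1
  have hx01 : x0 - 1 = η * L := by simp only [hx0def]; ring
  rw [hx01] at h1
  nlinarith
end

section
/- Fix L > 0, π₁ > π₂ > 0 with π₁ + π₂ = 1, a ∈ (1/2, 1), and 0 < η < 1/(Lπ₁). On ℝ, let f₁(x) = π₁(L/2)x², f₂(x) = π₂(L/2)x², X = {x : x ≥ 1} with projection P_X(x) = max(x, 1), so x* = 1 is the minimizer of f₁ + f₂ over X. Let R be the doubly stochastic matrix with R₁₁ = R₂₂ = a, R₁₂ = R₂₁ = 1 − a (so φ = (1/2, 1/2) satisfies φᵀR = φᵀ), and let C be any column-stochastic 2×2 matrix with Cπ = π where π = (π₁, π₂). Run Projected Push-Pull with λ = 1: x_i[0] = z_i[0] = 1/(1 − ηLπ₁), y_i[0] = f_i'(x_i[0]); x_i[k+1] = Σ_j R_{ij} z_j[k]; y_i[k+1] = Σ_j C_{ij} y_j[k] + f_i'(x_i[k+1]) − f_i'(x_i[k]); z_i[k+1] = P_X(x_i[k+1] − η y_i[k+1]). Then: D(x[1], φ) = 0, S(y[1], π) = 0, √(Σ_i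 φ_i|x_i[1] − x*|²) = ηLπ₁/(1 − ηLπ₁) > 0, and D(x[2], φ) = (1/√2)(2a − 1)·ηL(π₁ − π₂)/(1 − ηLπ₁) > 0. Consequently, any constants c₁, c₂, c₃ ≥ 0 with D(x[2], φ) ≤ c₁·√(Σ_i φ_i|x_i[1] − x*|²) + c₂·D(x[1], φ) + c₃·S(y[1], π) satisfy c₁ ≥ (1/√2)(2a − 1)(1 − π₂/π₁), a positive lower bound independent of η. -/
open Finset

/-- Impossibility result for the consensus bound with `λ = 1`,
Lemma `impossiblilty_consensus_bound`. Two agents on `ℝ` with `f₁(x) = π₁ (L/2) x²`,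
`f₂(x) = π₂ (L/2) x²`, constraint set `X = {x : x ≥ 1}` (projection `max · 1`),
doubly stochastic `R` with diagonal `a ∈ (1/2, 1)`, column-stochastic `C` with `Cπ = π`,
`λ = 1`, initial points `x_i[0] = z_i[0] = 1/(1 - ηLπ₁)` and `y_i[0] = f_i'(x_i[0])`.
Then `D(x[1], φ) = 0`, `S(y[1], π) = 0`,
`‖x[1] - x*‖_φ = ηLπ₁/(1 - ηLπ₁) > 0`,
`D(x[2], φ) = (1/√2)(2a - 1)·ηL(π₁ - π₂)/(1 - ηLπ₁) > 0`,
and any `c₁, c₂, c₃ ≥ 0` bounding `D(x[2], φ)` in terms of these errors satisfy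
`c₁ ≥ (1/√2)(2a - 1)(1 - π₂/π₁)`. -/
theorem pushpull_impossibility_consensus
    (L : ℝ) (hL : 0 < L)
    (p : Fin 2 → ℝ) (hp2 : 0 < p 1) (hp12 : p 1 < p 0) (hpsum : p 0 + p 1 = 1)
    (a : ℝ) (ha1 : 1 / 2 < a) (ha2 : a < 1)
    (η : ℝ) (hη0 : 0 < η) (hη : η < 1 / (L * p 0))
    (R : Fin 2 → Fin 2 → ℝ)
    (hR : R 0 0 = a ∧ R 1 1 = a ∧ R 0 1 = 1 - a ∧ R 1 0 = 1 - a)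
    (C : Fin 2 → Fin 2 → ℝ) (hCnonneg : ∀ i j, 0 ≤ C i j)
    (hCcol : ∀ j, ∑ i, C i j = 1) (hCpi : ∀ i, ∑ j, C i j * p j = p i)
    (x y z : ℕ → Fin 2 → ℝ)
    (hxinit : ∀ i, x 0 i = 1 / (1 - η * L * p 0))
    (hzinit : ∀ i, z 0 i = 1 / (1 - η * L * p 0))
    (hyinit : ∀ i, y 0 i = p i * L * (1 / (1 - η * L * p 0)))
    (hxiter : ∀ k i, x (k + 1) i = ∑ j, R i j * z k j)
    (hyiter : ∀ k i, y (k + 1) i =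
      (∑ j, C i j * y k j) + p i * L * x (k + 1) i - p i * L * x k i)
    (hziter : ∀ k i, z (k + 1) i = max (x (k + 1) i - η * y (k + 1) i) 1) :
    Real.sqrt (∑ i, ∑ j, (1 / 2 : ℝ) * (1 / 2 : ℝ) * |x 1 i - x 1 j| ^ 2) = 0
    ∧ Real.sqrt (∑ i, p i * |y 1 i / p i - (∑ l, y 1 l)| ^ 2) = 0
    ∧ Real.sqrt (∑ i, (1 / 2 : ℝ) * |x 1 i - 1| ^ 2)
        = η * L * p 0 / (1 - η * L * p 0)
    ∧ 0 < η * L * p 0 / (1 - η * L * p 0)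
    ∧ Real.sqrt (∑ i, ∑ j, (1 / 2 : ℝ) * (1 / 2 : ℝ) * |x 2 i - x 2 j| ^ 2)
        = (1 / Real.sqrt 2) * (2 * a - 1) * (η * L * (p 0 - p 1) / (1 - η * L * p 0))
    ∧ 0 < (1 / Real.sqrt 2) * (2 * a - 1) * (η * L * (p 0 - p 1) / (1 - η * L * p 0))
    ∧ ∀ c₁ c₂ c₃ : ℝ, 0 ≤ c₁ → 0 ≤ c₂ → 0 ≤ c₃ →
        Real.sqrt (∑ i, ∑ j, (1 / 2 : ℝ) * (1 / 2 : ℝ) * |x 2 i - x 2 j| ^ 2)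
          ≤ c₁ * Real.sqrt (∑ i, (1 / 2 : ℝ) * |x 1 i - 1| ^ 2)
            + c₂ * Real.sqrt (∑ i, ∑ j, (1 / 2 : ℝ) * (1 / 2 : ℝ) * |x 1 i - x 1 j| ^ 2)
            + c₃ * Real.sqrt (∑ i, p i * |y 1 i / p i - (∑ l, y 1 l)| ^ 2) →
        (1 / Real.sqrt 2) * (2 * a - 1) * (1 - p 1 / p 0) ≤ c₁ := by
  obtain ⟨hR00, hR11, hR01, hR10⟩ := hR
  have hp0 : 0 < p 0 := lt_trans hp2 hp12
  have hLp : 0 < L * p 0 := mul_pos hL hp0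
  have hpos : 0 < 1 - η * L * p 0 := by
    have := (lt_div_iff₀ hLp).mp hη
    nlinarith
  set β := 1 / (1 - η * L * p 0) with hβdef
  have hβpos : 0 < β := by positivity
  have hβ1 : (1 - η * L * p 0) * β = 1 := by
    rw [hβdef]; field_simp
  have hx1 : ∀ i, x 1 i = β := by
    intro i
    fin_cases i
    · show x 1 0 = β
      rw [hxiter, Fin.sum_univ_two, hzinit, hzinit, hR00, hR01]; ring
    · show x 1 1 = β
      rw [hxiter, Fin.sum_univ_two, hzinit, hzinit, hR10, hR11]; ring
  have hy1 : ∀ i, y 1 i = p i * L * β := by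
    intro i
    have hc := hCpi i
    rw [Fin.sum_univ_two] at hc
    rw [hyiter, Fin.sum_univ_two, hyinit, hyinit, hxinit, hx1]
    linear_combination (L * β) * hc
  have hδpos : 0 < η * L * (p 0 - p 1) * β :=
    mul_pos (mul_pos (mul_pos hη0 hL) (sub_pos.mpr hp12)) hβpos
  have hz1_0 : z 1 0 = 1 := by
    rw [hziter, hx1, hy1]
    rw [show β - η * (p 0 * L * β) = 1 from by linear_combination hβ1]
    exact max_self 1
  have hz1_1 : z 1 1 = β - η * (p 1 * L * β) := by
    rw [hziter, hx1, hy1]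
    apply max_eq_left
    nlinarith [hβ1, hδpos]
  have hx2_0 : x 2 0 = a * 1 + (1 - a) * (β - η * (p 1 * L * β)) := by
    rw [hxiter, Fin.sum_univ_two, hz1_0, hz1_1, hR00, hR01]
  have hx2_1 : x 2 1 = (1 - a) * 1 + a * (β - η * (p 1 * L * β)) := by
    rw [hxiter, Fin.sum_univ_two, hz1_0, hz1_1, hR10, hR11]
  have h2a : 0 < 2 * a - 1 := by linarith
  have hdiff : x 2 1 - x 2 0 = (2 * a - 1) * (η * L * (p 0 - p 1) * β) := by
    rw [hx2_1, hx2_0]; linear_combination (2 * a - 1) * hβ1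
  -- fact 1
  have hD1 : Real.sqrt (∑ i, ∑ j, (1 / 2 : ℝ) * (1 / 2 : ℝ) * |x 1 i - x 1 j| ^ 2) = 0 := by
    simp [Fin.sum_univ_two, hx1]
  -- fact 2
  have hS1 : Real.sqrt (∑ i, p i * |y 1 i / p i - (∑ l, y 1 l)| ^ 2) = 0 := by
    have hyd0 : y 1 0 / p 0 = L * β := by rw [hy1]; field_simp [hp0.ne']
    have hyd1 : y 1 1 / p 1 = L * β := by rw [hy1]; field_simp [hp2.ne']
    have hsum' : y 1 0 + y 1 1 = L * β := by
      rw [hy1, hy1]; linear_combination (L * β) * hpsum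
    simp [Fin.sum_univ_two, hyd0, hyd1, hsum']
  -- fact 3
  have hb1 : β - 1 = η * L * p 0 * β := by linear_combination hβ1
  have hrhs : η * L * p 0 / (1 - η * L * p 0) = η * L * p 0 * β := by
    rw [hβdef]; ring
  have hN1 : Real.sqrt (∑ i, (1 / 2 : ℝ) * |x 1 i - 1| ^ 2)
      = η * L * p 0 / (1 - η * L * p 0) := by
    have hsq : (∑ i, (1 / 2 : ℝ) * |x 1 i - 1| ^ 2) = (η * L * p 0 * β) ^ 2 := by
      simp only [Fin.sum_univ_two, hx1, sq_abs, hb1]; ring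
    rw [hsq, Real.sqrt_sq (by positivity), hrhs]
  -- fact 4
  have hP1 : 0 < η * L * p 0 / (1 - η * L * p 0) := div_pos (by positivity) hpos
  -- fact 5
  have hrhs2 : η * L * (p 0 - p 1) / (1 - η * L * p 0) = η * L * (p 0 - p 1) * β := by
    rw [hβdef]; ring
  have ht : 0 ≤ (2 * a - 1) * (η * L * (p 0 - p 1) * β) := le_of_lt (mul_pos h2a hδpos)
  have hD2 : Real.sqrt (∑ i, ∑ j, (1 / 2 : ℝ) * (1 / 2 : ℝ) * |x 2 i - x 2 j| ^ 2)
      = (1 / Real.sqrt 2) * (2 * a - 1) * (η * L * (p 0 - p 1) / (1 - η * L * p 0)) := by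
    have hsum2 : (∑ i, ∑ j, (1 / 2 : ℝ) * (1 / 2 : ℝ) * |x 2 i - x 2 j| ^ 2)
        = ((2 * a - 1) * (η * L * (p 0 - p 1) * β)) ^ 2 / 2 := by
      simp only [Fin.sum_univ_two, sq_abs]
      linear_combination ((x 2 1 - x 2 0 + (2 * a - 1) * (η * L * (p 0 - p 1) * β)) / 2) * hdiff
    rw [hsum2, Real.sqrt_div (sq_nonneg _), Real.sqrt_sq ht, hrhs2]
    rw [div_eq_mul_inv, one_div]
    ring
  -- fact 6
  have hP2 : 0 < (1 / Real.sqrt 2) * (2 * a - 1)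
      * (η * L * (p 0 - p 1) / (1 - η * L * p 0)) := by
    have hs2 : 0 < Real.sqrt 2 := Real.sqrt_pos.mpr two_pos
    exact mul_pos (mul_pos (by positivity) h2a)
      (div_pos (mul_pos (mul_pos hη0 hL) (sub_pos.mpr hp12)) hpos)
  refine ⟨hD1, hS1, hN1, hP1, hD2, hP2, ?_⟩
  intro c₁ c₂ c₃ hc₁ hc₂ hc₃ hineq
  rw [hD2, hN1, hD1, hS1] at hineq
  have hs2 : 0 < Real.sqrt 2 := Real.sqrt_pos.mpr two_pos
  have hK : 0 < η * L * p 0 / (1 - η * L * p 0) := hP1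
  apply le_of_mul_le_mul_right _ hK
  have heq : (1 / Real.sqrt 2) * (2 * a - 1) * (1 - p 1 / p 0)
      * (η * L * p 0 / (1 - η * L * p 0))
      = (1 / Real.sqrt 2) * (2 * a - 1) * (η * L * (p 0 - p 1) / (1 - η * L * p 0)) := by
    field_simp
  rw [heq]
  simp only [mul_zero, add_zero] at hineq
  linarith
end

section
/- Let X ⊆ ℝ^d be a nonempty closed convex set with metric projection P_X, and let f_1, …, f_n : ℝ^d → ℝ be differentiable and L-smooth with L > 0; set f = (1/n)Σ_l f_l. Let φ, π ∈ ℝⁿ be positive stochastic vectors, let η > 0, λ ∈ (0, 1], and let x_1, …, x_n, y_1, …, y_n ∈ ℝ^d satisfy the gradient-tracking identity Σ_l y_l = Σ_l ∇f_l(x_l). Define z_i = (1 − λ)x_i + λ P_X(x_i − η y_i) and w_i = (1 − λ)x_i + λ P_X(x_i − η n π_i ∇f(x_i)). Then √(Σ_i φ_i ‖z_i − w_i‖²) ≤ ηλL·√(n / min_i φ_i)·D(x, φ) + ηλ·S(y, π). -/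
open Finset

/-- Consensus error `D(u, a) = √(Σ_i Σ_j a_i a_j ‖u_i − u_j‖²)`. -/
noncomputable def Derr {n d : ℕ} (a : Fin n → ℝ) (u : Fin n → EuclideanSpace ℝ (Fin d)) : ℝ :=
  Real.sqrt (∑ i, ∑ j, a i * a j * ‖u i - u j‖ ^ 2)

/-- Gradient-tracking error `S(y, a) = √(Σ_i a_i ‖y_i/a_i − Σ_l y_l‖²)`. -/
noncomputable def Serr {n d : ℕ} (a : Fin n → ℝ) (y : Fin n → EuclideanSpace ℝ (Fin d)) : ℝ :=
  Real.sqrt (∑ i, a i * ‖(a i)⁻¹ • y i - (∑ l, y l)‖ ^ 2)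

/-- Minimum entry of a vector over `Fin n`, `n ≠ 0`. -/
noncomputable def fmin {n : ℕ} [NeZero n] (a : Fin n → ℝ) : ℝ :=
  Finset.univ.inf' Finset.univ_nonempty a

/-!
Since the metric projection onto a convex set is nonexpansive, `‖z_i - w_i‖` is at most `ηλ`
times the distance between the two search directions `y_i` and `π_i Σ_l ∇f_l(x_i)`. Gradient
tracking rewrites `y_i - π_i Σ_l ∇f_l(x_i)` as `π_i (y_i/π_i - Σ_l y_l)` plus
`π_i Σ_l (∇f_l(x_l) - ∇f_l(x_i))`; the second part is at most `π_i L Σ_l ‖x_l - x_i‖` by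
smoothness. Minkowski's inequality in the `φ`-weighted `ℓ²` norm separates the two parts; the
tracking part is bounded by `S(y, π)` since `φ_i π_i ≤ 1`, and the consensus part by
`√(n / min φ) D(x, φ)` via Cauchy–Schwarz `(Σ_l a_l)² ≤ n Σ_l a_l²` and `1 ≤ φ_l / min φ`.
-/

open scoped InnerProductSpace

section Projection
variable {E : Type*} [NormedAddCommGroup E] [InnerProductSpace ℝ E]
  {X : Set E} {P : E → E}

theorem inner_sub_proj_sub_proj_nonpos (hX : Convex ℝ X) (hPmem : ∀ v, P v ∈ X)
    (hPproj : ∀ v, ∀ u ∈ X, ‖v - P v‖ ≤ ‖v - u‖) (v : E) {u : E} (hu : u ∈ X) :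
    ⟪v - P v, u - P v⟫_ℝ ≤ 0 := by
  refine (norm_eq_iInf_iff_real_inner_le_zero hX (hPmem v)).1 ?_ u hu
  have : Nonempty X := ⟨⟨u, hu⟩⟩
  exact le_antisymm (le_ciInf fun w => hPproj v w w.2)
    (ciInf_le ⟨0, Set.forall_mem_range.2 fun w : X => norm_nonneg (v - w)⟩ ⟨P v, hPmem v⟩)

theorem norm_proj_sub_proj_le (hX : Convex ℝ X) (hPmem : ∀ v, P v ∈ X)
    (hPproj : ∀ v, ∀ u ∈ X, ‖v - P v‖ ≤ ‖v - u‖) (a b : E) :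
    ‖P a - P b‖ ≤ ‖a - b‖ := by
  have ha := inner_sub_proj_sub_proj_nonpos hX hPmem hPproj a (hPmem b)
  have hb := inner_sub_proj_sub_proj_nonpos hX hPmem hPproj b (hPmem a)
  -- Adding the two variational inequalities gives `‖P a - P b‖² ≤ ⟪a - b, P a - P b⟫`.
  have key : ‖P a - P b‖ ^ 2 ≤ ‖a - b‖ * ‖P a - P b‖ := by
    have : ‖P a - P b‖ ^ 2 - ⟪a - b, P a - P b⟫_ℝ
        = ⟪a - P a, P b - P a⟫_ℝ + ⟪b - P b, P a - P b⟫_ℝ := by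
      rw [← real_inner_self_eq_norm_sq]
      simp only [inner_sub_left, inner_sub_right, real_inner_comm]
      ring
    linarith [real_inner_le_norm (a - b) (P a - P b)]
  nlinarith [norm_nonneg (P a - P b), norm_nonneg (a - b)]

end Projection

theorem gradient_const_mul_sum {E ι : Type*} [NormedAddCommGroup E] [InnerProductSpace ℝ E]
    [CompleteSpace E] {s : Finset ι} {f : ι → E → ℝ} {p : E}
    (hf : ∀ l ∈ s, DifferentiableAt ℝ (f l) p) (c : ℝ) :
    gradient (fun v => c * ∑ l ∈ s, f l v) p = c • ∑ l ∈ s, gradient (f l) p := by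
  simp only [gradient]
  rw [fderiv_const_mul (DifferentiableAt.fun_sum hf), fderiv_fun_sum hf, map_smul, map_sum]

section Tracking
variable {ι E : Type*} [Fintype ι] [NormedAddCommGroup E]
  {g : ι → E → E} {L : ℝ}

theorem norm_sum_comp_sub_sum_le (hg : ∀ l u v, ‖g l u - g l v‖ ≤ L * ‖u - v‖)
    (x : ι → E) (p : E) :
    ‖∑ l, g l (x l) - ∑ l, g l p‖ ≤ L * ∑ l, ‖x l - p‖ := by
  rw [← sum_sub_distrib, mul_sum]
  exact (norm_sum_le _ _).trans (sum_le_sum fun l _ => hg l _ _)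

theorem norm_sub_smul_sum_le_of_sum_eq [NormedSpace ℝ E]
    (hg : ∀ l u v, ‖g l u - g l v‖ ≤ L * ‖u - v‖)
    {x y : ι → E} (htrack : ∑ l, y l = ∑ l, g l (x l)) {a : ℝ} (ha : 0 < a) (v p : E) :
    ‖v - a • ∑ l, g l p‖ ≤ a * ‖a⁻¹ • v - ∑ l, y l‖ + a * (L * ∑ l, ‖x l - p‖) := by
  have hsplit : v - a • ∑ l, g l p
      = a • (a⁻¹ • v - ∑ l, y l) + a • (∑ l, g l (x l) - ∑ l, g l p) := by
    rw [smul_sub, smul_sub, smul_inv_smul₀ ha.ne', htrack]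
    abel
  rw [hsplit]
  refine (norm_add_le _ _).trans ?_
  rw [norm_smul, norm_smul, Real.norm_of_nonneg ha.le]
  gcongr
  exact norm_sum_comp_sub_sum_le hg x p

theorem norm_relaxed_sub_relaxed_le [NormedSpace ℝ E] {P : E → E} {lam : ℝ} (hlam : 0 ≤ lam)
    (hP : ∀ a b, ‖P a - P b‖ ≤ ‖a - b‖) (x a b : E) :
    ‖((1 - lam) • x + lam • P a) - ((1 - lam) • x + lam • P b)‖ ≤ lam * ‖a - b‖ := by
  rw [add_sub_add_left_eq_sub, ← smul_sub, norm_smul, Real.norm_of_nonneg hlam]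
  exact mul_le_mul_of_nonneg_left (hP a b) hlam

theorem norm_relaxed_sub_relaxed_le_of_sum_eq [NormedSpace ℝ E] {P : E → E}
    (hP : ∀ a b, ‖P a - P b‖ ≤ ‖a - b‖) (hg : ∀ l u v, ‖g l u - g l v‖ ≤ L * ‖u - v‖)
    {x y : ι → E} (htrack : ∑ l, y l = ∑ l, g l (x l)) {lam η a : ℝ} (hlam : 0 ≤ lam)
    (hη : 0 ≤ η) (ha : 0 < a) (i : ι) :
    ‖((1 - lam) • x i + lam • P (x i - η • y i))
        - ((1 - lam) • x i + lam • P (x i - η • a • ∑ l, g l (x i)))‖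
      ≤ lam * η * (a * ‖a⁻¹ • y i - ∑ l, y l‖ + a * (L * ∑ l, ‖x l - x i‖)) := by
  calc _ ≤ lam * ‖(x i - η • y i) - (x i - η • a • ∑ l, g l (x i))‖ :=
        norm_relaxed_sub_relaxed_le hlam hP _ _ _
    _ = lam * η * ‖y i - a • ∑ l, g l (x i)‖ := by
        rw [sub_sub_sub_cancel_left, ← smul_sub, norm_smul, Real.norm_of_nonneg hη,
          norm_sub_rev, mul_assoc]
    _ ≤ _ := by
        gcongr
        exact norm_sub_smul_sum_le_of_sum_eq hg htrack ha _ _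

end Tracking

theorem sqrt_sum_mul_sq_le {ι : Type*} [Fintype ι] {φ r s t : ι → ℝ} {a b : ℝ}
    (hφ : ∀ i, 0 ≤ φ i) (ha : 0 ≤ a) (hb : 0 ≤ b) (hr : ∀ i, 0 ≤ r i)
    (h : ∀ i, r i ≤ a * s i + b * t i) :
    √(∑ i, φ i * r i ^ 2) ≤ a * √(∑ i, φ i * s i ^ 2) + b * √(∑ i, φ i * t i ^ 2) := by
  -- `√(Σ φ_i u_i²)` is the Euclidean norm of `(√φ_i u_i)_i`, so this is the triangle inequality.
  have hnorm : ∀ u : ι → ℝ,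
      ‖(WithLp.toLp 2 fun i => √(φ i) * u i : EuclideanSpace ℝ ι)‖ = √(∑ i, φ i * u i ^ 2) := by
    intro u
    simp only [EuclideanSpace.norm_eq, Real.norm_eq_abs, sq_abs, mul_pow, Real.sq_sqrt (hφ _)]
  calc √(∑ i, φ i * r i ^ 2) ≤ √(∑ i, φ i * (a * s i + b * t i) ^ 2) := by
        gcongr with i
        · exact hφ i
        · exact hr i
        · exact h i
    _ = ‖a • (WithLp.toLp 2 fun i => √(φ i) * s i : EuclideanSpace ℝ ι)
          + b • (WithLp.toLp 2 fun i => √(φ i) * t i : EuclideanSpace ℝ ι)‖ := by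
        rw [← hnorm]
        congr 1
        ext i
        simp only [PiLp.add_apply, PiLp.smul_apply, smul_eq_mul]
        ring
    _ ≤ a * √(∑ i, φ i * s i ^ 2) + b * √(∑ i, φ i * t i ^ 2) := by
        refine (norm_add_le _ _).trans_eq ?_
        rw [norm_smul, norm_smul, Real.norm_of_nonneg ha, Real.norm_of_nonneg hb, hnorm, hnorm]

theorem sq_sum_le_card_div_mul_sum_mul_sq {ι : Type*} (s : Finset ι) {φ u : ι → ℝ} {m : ℝ}
    (hm : 0 < m) (hφ : ∀ l ∈ s, m ≤ φ l) :
    (∑ l ∈ s, u l) ^ 2 ≤ #s / m * ∑ l ∈ s, φ l * u l ^ 2 := by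
  calc (∑ l ∈ s, u l) ^ 2 ≤ #s * ∑ l ∈ s, u l ^ 2 := sq_sum_le_card_mul_sum_sq
    _ ≤ #s * ∑ l ∈ s, φ l / m * u l ^ 2 := by
        gcongr with l hl
        exact le_mul_of_one_le_left (sq_nonneg _) ((one_le_div hm).2 (hφ l hl))
    _ = #s / m * ∑ l ∈ s, φ l * u l ^ 2 := by
        rw [mul_sum, mul_sum]
        congr 1 with l
        field_simp

theorem fmin_pos {n : ℕ} [NeZero n] {a : Fin n → ℝ} (ha : ∀ i, 0 < a i) : 0 < fmin a :=
  (lt_inf'_iff _).2 fun i _ => ha i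

theorem fmin_le {n : ℕ} [NeZero n] (a : Fin n → ℝ) (i : Fin n) : fmin a ≤ a i :=
  inf'_le _ (mem_univ i)

theorem sqrt_sum_mul_sq_le_Derr {n d : ℕ} [NeZero n] {φ π : Fin n → ℝ}
    (hφ : ∀ i, 0 < φ i) (hπ0 : ∀ i, 0 ≤ π i) (hπ1 : ∀ i, π i ≤ 1)
    (x : Fin n → EuclideanSpace ℝ (Fin d)) :
    √(∑ i, φ i * (π i * ∑ l, ‖x l - x i‖) ^ 2) ≤ √(n / fmin φ) * Derr φ x := by
  rw [Derr, ← Real.sqrt_mul (div_nonneg n.cast_nonneg (fmin_pos hφ).le), mul_sum]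
  refine Real.sqrt_le_sqrt (sum_le_sum fun i _ => ?_)
  have hsum : 0 ≤ ∑ l, ‖x l - x i‖ := sum_nonneg fun l _ => norm_nonneg _
  calc φ i * (π i * ∑ l, ‖x l - x i‖) ^ 2 ≤ φ i * (∑ l, ‖x l - x i‖) ^ 2 := by
        gcongr
        · exact (hφ i).le
        · exact mul_nonneg (hπ0 i) hsum
        · exact mul_le_of_le_one_left hsum (hπ1 i)
    _ ≤ φ i * (n / fmin φ * ∑ l, φ l * ‖x l - x i‖ ^ 2) := by
        gcongr
        · exact (hφ i).le
        · simpa using sq_sum_le_card_div_mul_sum_mul_sq univ (fmin_pos hφ)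
            fun l _ => fmin_le φ l
    _ = n / fmin φ * ∑ j, φ i * φ j * ‖x i - x j‖ ^ 2 := by
        simp only [mul_sum, norm_sub_rev (x _) (x i)]
        congr 1 with j
        ring

theorem sqrt_sum_mul_sq_le_Serr {n d : ℕ} {φ π : Fin n → ℝ}
    (hφ1 : ∀ i, φ i ≤ 1) (hπ0 : ∀ i, 0 ≤ π i) (hπ1 : ∀ i, π i ≤ 1)
    (y : Fin n → EuclideanSpace ℝ (Fin d)) :
    √(∑ i, φ i * (π i * ‖(π i)⁻¹ • y i - ∑ l, y l‖) ^ 2) ≤ Serr π y := by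
  refine Real.sqrt_le_sqrt (sum_le_sum fun i _ => ?_)
  have hφπ : φ i * π i ≤ 1 := mul_le_one₀ (hφ1 i) (hπ0 i) (hπ1 i)
  calc φ i * (π i * ‖(π i)⁻¹ • y i - ∑ l, y l‖) ^ 2
      = φ i * π i * (π i * ‖(π i)⁻¹ • y i - ∑ l, y l‖ ^ 2) := by ring
    _ ≤ π i * ‖(π i)⁻¹ • y i - ∑ l, y l‖ ^ 2 := by
        exact mul_le_of_le_one_left (mul_nonneg (hπ0 i) (sq_nonneg _)) hφπ

theorem imperfect_gradient_error_bound_general {n d : ℕ} [NeZero n]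
    (X : Set (EuclideanSpace ℝ (Fin d))) (hXconvex : Convex ℝ X)
    (P : EuclideanSpace ℝ (Fin d) → EuclideanSpace ℝ (Fin d))
    (hPmem : ∀ v, P v ∈ X)
    (hPproj : ∀ v, ∀ u ∈ X, ‖v - P v‖ ≤ ‖v - u‖)
    (f : Fin n → EuclideanSpace ℝ (Fin d) → ℝ)
    (hfdiff : ∀ i, Differentiable ℝ (f i))
    (L : ℝ) (hL : 0 < L)
    (hsmooth : ∀ i u v, ‖gradient (f i) u - gradient (f i) v‖ ≤ L * ‖u - v‖)
    (φ π : Fin n → ℝ)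
    (hφpos : ∀ i, 0 < φ i) (hφsum : ∑ i, φ i = 1)
    (hπpos : ∀ i, 0 < π i) (hπsum : ∑ i, π i = 1)
    (η lam : ℝ) (hη : 0 < η) (hlam0 : 0 < lam)
    (x y : Fin n → EuclideanSpace ℝ (Fin d))
    (htrack : ∑ l, y l = ∑ l, gradient (f l) (x l))
    (z w : Fin n → EuclideanSpace ℝ (Fin d))
    (hz : ∀ i, z i = (1 - lam) • x i + lam • P (x i - η • y i))
    (hw : ∀ i, w i = (1 - lam) • x i + lam • P (x i -
      (η * n * π i) • gradient (fun v => (1 / (n : ℝ)) * ∑ l, f l v) (x i))) :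
    Real.sqrt (∑ i, φ i * ‖z i - w i‖ ^ 2)
      ≤ η * lam * L * Real.sqrt ((n : ℝ) / fmin φ) * Derr φ x + η * lam * Serr π y := by
  have hφ1 : ∀ i, φ i ≤ 1 := fun i => hφsum ▸ single_le_sum (fun j _ => (hφpos j).le) (mem_univ i)
  have hπ1 : ∀ i, π i ≤ 1 := fun i => hπsum ▸ single_le_sum (fun j _ => (hπpos j).le) (mem_univ i)
  have hpoint : ∀ i, ‖z i - w i‖ ≤ η * lam * L * (π i * ∑ l, ‖x l - x i‖)
      + η * lam * (π i * ‖(π i)⁻¹ • y i - ∑ l, y l‖) := by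
    intro i
    have hw' : w i = (1 - lam) • x i + lam • P (x i - η • π i • ∑ l, gradient (f l) (x i)) := by
      have hn : (n : ℝ) ≠ 0 := Nat.cast_ne_zero.2 (NeZero.ne n)
      rw [hw i, gradient_const_mul_sum fun l _ => (hfdiff l).differentiableAt, smul_smul,
        smul_smul, show η * n * π i * (1 / n) = η * π i by field_simp]
    rw [hz i, hw']
    refine (norm_relaxed_sub_relaxed_le_of_sum_eq (norm_proj_sub_proj_le hXconvex hPmem hPproj)
      hsmooth htrack hlam0.le hη.le (hπpos i) i).trans_eq ?_
    ring
  calc √(∑ i, φ i * ‖z i - w i‖ ^ 2)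
      ≤ η * lam * L * √(∑ i, φ i * (π i * ∑ l, ‖x l - x i‖) ^ 2)
        + η * lam * √(∑ i, φ i * (π i * ‖(π i)⁻¹ • y i - ∑ l, y l‖) ^ 2) :=
        sqrt_sum_mul_sq_le (fun i => (hφpos i).le) (by positivity) (by positivity)
          (fun i => norm_nonneg _) hpoint
    _ ≤ η * lam * L * (√(n / fmin φ) * Derr φ x) + η * lam * Serr π y := by
        gcongr
        · exact sqrt_sum_mul_sq_le_Derr hφpos (fun i => (hπpos i).le) hπ1 x
        · exact sqrt_sum_mul_sq_le_Serr hφ1 (fun i => (hπpos i).le) hπ1 y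
    _ = η * lam * L * √(n / fmin φ) * Derr φ x + η * lam * Serr π y := by ring

/-- Bounding the error from imperfect gradients,
Proposition `imperfect_gradient_error`. With `z_i = (1-λ)x_i + λP(x_i - ηy_i)` and
`w_i = (1-λ)x_i + λP(x_i - ηnπ_i ∇f(x_i))`, under gradient tracking `Σ_l y_l = Σ_l ∇f_l(x_l)`,
`√(Σ_i φ_i ‖z_i − w_i‖²) ≤ ηλL·√(n/min φ)·D(x, φ) + ηλ·S(y, π)`. -/
theorem imperfect_gradient_error_bound {n d : ℕ} [NeZero n]
    (X : Set (EuclideanSpace ℝ (Fin d))) (hXne : X.Nonempty)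
    (hXclosed : IsClosed X) (hXconvex : Convex ℝ X)
    (P : EuclideanSpace ℝ (Fin d) → EuclideanSpace ℝ (Fin d))
    (hPmem : ∀ v, P v ∈ X)
    (hPproj : ∀ v, ∀ u ∈ X, ‖v - P v‖ ≤ ‖v - u‖)
    (f : Fin n → EuclideanSpace ℝ (Fin d) → ℝ)
    (hfdiff : ∀ i, Differentiable ℝ (f i))
    (L : ℝ) (hL : 0 < L)
    (hsmooth : ∀ i u v, ‖gradient (f i) u - gradient (f i) v‖ ≤ L * ‖u - v‖)
    (φ π : Fin n → ℝ)
    (hφpos : ∀ i, 0 < φ i) (hφsum : ∑ i, φ i = 1)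
    (hπpos : ∀ i, 0 < π i) (hπsum : ∑ i, π i = 1)
    (η lam : ℝ) (hη : 0 < η) (hlam0 : 0 < lam) (hlam1 : lam ≤ 1)
    (x y : Fin n → EuclideanSpace ℝ (Fin d))
    (htrack : ∑ l, y l = ∑ l, gradient (f l) (x l))
    (z w : Fin n → EuclideanSpace ℝ (Fin d))
    (hz : ∀ i, z i = (1 - lam) • x i + lam • P (x i - η • y i))
    (hw : ∀ i, w i = (1 - lam) • x i + lam • P (x i -
      (η * n * π i) • gradient (fun v => (1 / (n : ℝ)) * ∑ l, f l v) (x i))) :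
    Real.sqrt (∑ i, φ i * ‖z i - w i‖ ^ 2)
      ≤ η * lam * L * Real.sqrt ((n : ℝ) / fmin φ) * Derr φ x + η * lam * Serr π y :=
  imperfect_gradient_error_bound_general X hXconvex P hPmem hPproj f hfdiff L hL hsmooth φ π hφpos
    hφsum hπpos hπsum η lam hη hlam0 x y htrack z w hz hw
end
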